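/- In the Poisson zoo model on Z^d, if the second moment m_2 = Σ_{H∈H} |H|^2·ν(H) is finite, then for any v with 0 < v < 1/((2d+1)·m_2), the expected size of the connected cluster of the origin in S^v is finite; in particular S^v almost surely does not percolate. -/

import Mathlib

open MeasureTheory ENNReal Filter

noncomputable section

abbrev Zd (d : ℕ) := Fin d → ℤ

def supNorm {d : ℕ} (x : Zd d) : ℕ := Finset.univ.sup fun i => (x i).natAbs

def IsNbr {d : ℕ} (x y : Zd d) : Prop := (∑ i, |x i - y i|) = 1

def stepVec {d : ℕ} (p : Fin d × Bool) : Zd d :=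
  fun j => if j = p.1 then (if p.2 then 1 else -1) else 0

def nbrs {d : ℕ} (y : Zd d) : Finset (Zd d) :=
  Finset.univ.image fun p : Fin d × Bool => y + stepVec p

/-- A family of measures which is a simple random walk on `ℤ^d` started at `x`. -/
structure SRW (d : ℕ) where
  P : Zd d → Measure (ℕ → Zd d)
  isProb : ∀ x, IsProbabilityMeasure (P x)
  start : ∀ x, P x {ω | ω 0 = x} = 1
  nn : ∀ x, P x {ω | ∀ t, IsNbr (ω t) (ω (t+1))} = 1
  cyl : ∀ (x : Zd d) (n : ℕ) (γ : ℕ → Zd d), γ 0 = x →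
      (∀ t < n, IsNbr (γ t) (γ (t+1))) →
      P x {ω | ∀ t ≤ n, ω t = γ t} = (((2 * d : ℕ) : ℝ≥0∞))⁻¹ ^ n

def HitBy {d : ℕ} (K : Set (Zd d)) (ℓ : ℕ) : Set (ℕ → Zd d) := {ω | ∃ t ≤ ℓ, ω t ∈ K}

def Hits {d : ℕ} (K : Set (Zd d)) : Set (ℕ → Zd d) := {ω | ∃ t, ω t ∈ K}

def nPaths (d : ℕ) : ℕ → Zd d → Zd d → ℕ
  | 0, x, y => if x = y then 1 else 0
  | t+1, x, y => ∑ z ∈ nbrs y, nPaths d t x z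

def pKer (d t : ℕ) (x y : Zd d) : ℝ≥0∞ := (nPaths d t x y : ℝ≥0∞) / ((2*d : ℕ) : ℝ≥0∞)^t

def green (d : ℕ) (x y : Zd d) : ℝ≥0∞ := ∑' t, pKer d t x y

def nAvoid {d : ℕ} (K : Finset (Zd d)) : ℕ → Zd d → ℕ
  | 0, _ => 1
  | t+1, x => ∑ z ∈ (nbrs x).filter (fun z => z ∉ K), nAvoid K t z

def escProb {d : ℕ} (K : Finset (Zd d)) (x : Zd d) : ℝ≥0∞ :=
  ⨅ n, (nAvoid K n x : ℝ≥0∞) / ((2*d : ℕ) : ℝ≥0∞)^n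

def cap {d : ℕ} (K : Finset (Zd d)) : ℝ≥0∞ := ∑ x ∈ K, escProb K x

def ConnIn {d : ℕ} (S : Set (Zd d)) (x y : Zd d) : Prop :=
  ∃ (n : ℕ) (γ : ℕ → Zd d), γ 0 = x ∧ γ n = y ∧ (∀ t < n, IsNbr (γ t) (γ (t+1))) ∧ ∀ t ≤ n, γ t ∈ S

def PercSet {d : ℕ} (S : Set (Zd d)) : Prop := ∃ x ∈ S, {y | ConnIn S x y}.Infinite

def IsAnimal {d : ℕ} (H : Finset (Zd d)) : Prop :=
  (0 : Zd d) ∈ H ∧ ∀ x ∈ H, ∀ y ∈ H, ConnIn (H : Set (Zd d)) x y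

abbrev Animal (d : ℕ) := {H : Finset (Zd d) // IsAnimal H}

def zooTrace {d : ℕ} {Ω : Type*} (N : Zd d × Animal d → Ω → ℕ) (ω : Ω) : Set (Zd d) :=
  {z | ∃ p : Zd d × Animal d, 1 ≤ N p ω ∧ z - p.1 ∈ p.2.1}

def poissonProb (lam : ℝ) (k : ℕ) : ℝ≥0∞ :=
  ENNReal.ofReal (Real.exp (-lam) * lam ^ k / (Nat.factorial k))

def cluster {d : ℕ} (S : Set (Zd d)) (x : Zd d) : Set (Zd d) := {y | x ∈ S ∧ ConnIn S x y}

def closF {d : ℕ} (H : Finset (Zd d)) : Finset (Zd d) := H ∪ H.biUnion nbrs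


abbrev Worm (d : ℕ) := Σ n : ℕ, (Zd d × (Fin n → Fin d × Bool))

def wormLen {d : ℕ} (w : Worm d) : ℕ := w.1 + 1

def IsBernoulliSite {d : ℕ} (P : Measure (Zd d → Bool)) (p : ℝ≥0∞) : Prop :=
  ∀ A B : Finset (Zd d), Disjoint A B →
    P {η | (∀ a ∈ A, η a = true) ∧ ∀ b ∈ B, η b = false} = p ^ A.card * (1 - p) ^ B.card

/-- The critical probability of Bernoulli site percolation on `ℤ^d`. -/
def pcSite (d : ℕ) : ℝ≥0∞ :=
  sInf {p | ∀ P : Measure (Zd d → Bool), IsProbabilityMeasure P → IsBernoulliSite P p →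
    P {η | PercSet {x | η x = true}} = 1}

open Classical in
/-- The Grimmett–Marstrand exploration process: given an ordering `emb` of the (directed)
nearest-neighbour edges and outcomes `b t`, produce the pair (good set, bad set) at step `t`. -/
def explore {d : ℕ} (emb : (Zd d × Zd d) ↪ ℕ) (b : ℕ → Bool) : ℕ → Finset (Zd d) × Finset (Zd d)
  | 0 => if b 0 then ({0}, ∅) else (∅, {0})
  | t+1 =>
    let G := (explore emb b t).1
    let B := (explore emb b t).2
    let cand : Finset (Zd d × Zd d) :=
      G.biUnion fun u => ((nbrs u).filter fun w => w ∉ G ∧ w ∉ B).image fun w => (u, w)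
    if h : cand.Nonempty then
      let e := (Finset.exists_min_image cand (fun p => emb p) h).choose
      if b (t+1) then (insert e.2 G, B) else (G, insert e.2 B)
    else (G, B)

/-- Mutual Dirichlet energy of two measures on `ℤ^d` w.r.t. the random-walk Green function. -/
def energy (d : ℕ) (μ₁ μ₂ : Zd d → ℝ≥0∞) : ℝ≥0∞ :=
  ∑' x, ∑' y, green d x y * μ₁ x * μ₂ y

/-!
Every point of the cluster of `y` lies in the last animal of a chain of *distinct* present
animals `(x₀, H₀), …, (x_k, H_k)` with `y ∈ x₀ + H₀` and `x_i + closure(H_i)` meeting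
`x_{i+1} + H_{i+1}` (a path, not just a walk, in the graph of linked present animals).
Independence and `P(N ≥ 1) ≤ v ν(H)` bound the expected cluster size by the sum over such
chains of `∏ v ν(H_i) · |H_k|`. Given `(x, H)`, at most `(2d+1) |H| |H'|` translates of `H'`
are linked to it, so appending an animal multiplies this sum by at most `r = (2d+1) m₂ v`,
and the geometric series converges for `r < 1`. Finite expected cluster sizes at every site
make every cluster almost surely finite.
-/

section Lattice

variable {d : ℕ}

lemma IsNbr.symm {x y : Zd d} (h : IsNbr x y) : IsNbr y x := by
  simpa only [IsNbr, abs_sub_comm] using h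

lemma isNbr_sub_right {x y z : Zd d} : IsNbr (x - z) (y - z) ↔ IsNbr x y := by
  simp only [IsNbr, Pi.sub_apply, sub_sub_sub_cancel_right]

lemma IsNbr.exists_eq_add_stepVec {x y : Zd d} (h : IsNbr x y) :
    ∃ p, y = x + stepVec p := by
  classical
  obtain ⟨i, hi⟩ : ∃ i, x i ≠ y i := by
    by_contra! hxy
    simp [IsNbr, hxy] at h
  have hsplit := Finset.add_sum_erase Finset.univ (fun j => |x j - y j|) (Finset.mem_univ i)
  have hi1 : 1 ≤ |x i - y i| := Int.one_le_abs (sub_ne_zero.mpr hi)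
  have hrest : ∑ j ∈ Finset.univ.erase i, |x j - y j| = 0 := by
    have := Finset.sum_nonneg fun j (_ : j ∈ Finset.univ.erase i) => abs_nonneg (x j - y j)
    unfold IsNbr at h
    omega
  have hoff : ∀ j ≠ i, x j = y j := fun j hj => by
    have := (Finset.sum_eq_zero_iff_of_nonneg fun j _ => abs_nonneg (x j - y j)).1 hrest j
      (Finset.mem_erase.2 ⟨hj, Finset.mem_univ _⟩)
    rwa [abs_eq_zero, sub_eq_zero] at this
  have hxi : |x i - y i| = 1 := by unfold IsNbr at h; omega
  refine ⟨(i, decide (y i = x i + 1)), funext fun j => ?_⟩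
  by_cases hj : j = i
  · subst hj
    rcases (abs_eq zero_le_one).1 hxi with h1 | h1 <;> simp [stepVec] <;> omega
  · simp [stepVec, hj, hoff j hj]

lemma mem_nbrs_of_isNbr {x y : Zd d} (h : IsNbr x y) : y ∈ nbrs x := by
  obtain ⟨p, rfl⟩ := h.exists_eq_add_stepVec
  exact Finset.mem_image_of_mem _ (Finset.mem_univ p)

lemma card_nbrs_le (y : Zd d) : (nbrs y).card ≤ 2 * d :=
  Finset.card_image_le.trans_eq (by simp [mul_comm])

lemma card_closF_le (H : Finset (Zd d)) : (closF H).card ≤ (2 * d + 1) * H.card :=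
  calc (closF H).card ≤ H.card + (H.biUnion nbrs).card := Finset.card_union_le _ _
    _ ≤ H.card + H.card * (2 * d) := by
      gcongr
      exact Finset.card_biUnion_le_card_mul _ _ _ fun y _ => card_nbrs_le y
    _ = (2 * d + 1) * H.card := by ring

lemma mem_closF_of_isNbr {H : Finset (Zd d)} {a b : Zd d} (ha : a ∈ H) (h : IsNbr a b) :
    b ∈ closF H :=
  Finset.mem_union_right _ (Finset.mem_biUnion.2 ⟨a, ha, mem_nbrs_of_isNbr h⟩)

end Lattice

lemma Set.encard_le_tsum_encard_of_subset_iUnion {α ι : Type*} {s : Set α} {t : ι → Set α}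
    (h : s ⊆ ⋃ i, t i) : (s.encard : ℝ≥0∞) ≤ ∑' i, ((t i).encard : ℝ≥0∞) := by
  have hpt (x : α) : s.indicator 1 x ≤ ∑' i, (t i).indicator (1 : α → ℝ≥0∞) x := by
    by_cases hx : x ∈ s
    · obtain ⟨i, hi⟩ := Set.mem_iUnion.1 (h hx)
      exact (by simp [hx, hi] : s.indicator 1 x ≤ (t i).indicator 1 x).trans (ENNReal.le_tsum i)
    · simp [hx]
  calc (s.encard : ℝ≥0∞) = ∑' x, s.indicator 1 x := by
        rw [← ENNReal.tsum_set_one]; exact tsum_subtype s 1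
    _ ≤ ∑' x, ∑' i, (t i).indicator 1 x := ENNReal.tsum_le_tsum hpt
    _ = ∑' i, ((t i).encard : ℝ≥0∞) := by
      rw [ENNReal.tsum_comm]
      exact tsum_congr fun i => by rw [← ENNReal.tsum_set_one]; exact (tsum_subtype (t i) 1).symm

lemma ENNReal.tsum_prod_ite_le_of_encard_le {α β : Type*} (P : α × β → Prop) [DecidablePred P]
    (B : β → ℕ) (g : β → ℝ≥0∞) (hB : ∀ b, {a | P (a, b)}.encard ≤ B b) :
    ∑' q : α × β, (if P q then g q.2 else 0) ≤ ∑' b, (B b : ℝ≥0∞) * g b := by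
  rw [ENNReal.tsum_prod', ENNReal.tsum_comm]
  refine ENNReal.tsum_le_tsum fun b => ?_
  calc ∑' a, (if P (a, b) then g b else 0)
      = ∑' a, {a | P (a, b)}.indicator (fun _ => g b) a := by
        simp only [Set.indicator_apply, Set.mem_ofPred_eq]
    _ = ∑' _ : {a | P (a, b)}, g b := (tsum_subtype _ _).symm
    _ = ({a | P (a, b)}.encard : ℝ≥0∞) * g b := ENNReal.tsum_set_const _ _
    _ ≤ B b * g b := by gcongr; exact_mod_cast hB b

section ChainWeight

variable {α : Type*}

def chainWeight (a : α → ℝ≥0∞) (K : α → α → ℝ≥0∞) {k : ℕ} (c : Fin (k + 1) → α) : ℝ≥0∞ :=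
  a (c 0) * ∏ i : Fin k, K (c i.castSucc) (c i.succ)

lemma chainWeight_snoc (a : α → ℝ≥0∞) (K : α → α → ℝ≥0∞) {k : ℕ} (c : Fin (k + 1) → α)
    (q : α) :
    chainWeight a K (Fin.snoc c q : Fin (k + 2) → α) =
      chainWeight a K c * K (c (Fin.last k)) q := by
  simp only [chainWeight, Fin.prod_univ_castSucc, Fin.succ_castSucc, Fin.snoc_castSucc,
    Fin.succ_last, Fin.snoc_last, mul_assoc]
  rfl

lemma tsum_chainWeight_mul_le (a f : α → ℝ≥0∞) (K : α → α → ℝ≥0∞) (r : ℝ≥0∞)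
    (hK : ∀ p, ∑' q, K p q * f q ≤ r * f p) (k : ℕ) :
    ∑' c : Fin (k + 1) → α, chainWeight a K c * f (c (Fin.last k)) ≤
      r ^ k * ∑' p, a p * f p := by
  induction k with
  | zero =>
    rw [← (Equiv.funUnique (Fin 1) α).symm.tsum_eq]
    simp [chainWeight]
  | succ k ih =>
    calc ∑' c : Fin (k + 2) → α, chainWeight a K c * f (c (Fin.last (k + 1)))
        = ∑' c : Fin (k + 1) → α, chainWeight a K c * ∑' q, K (c (Fin.last k)) q * f q := by
          rw [← (Fin.snocEquiv fun _ => α).tsum_eq, ENNReal.tsum_prod', ENNReal.tsum_comm]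
          refine tsum_congr fun c => ?_
          rw [← ENNReal.tsum_mul_left]
          refine tsum_congr fun q => ?_
          simp [Fin.snocEquiv, chainWeight_snoc, mul_assoc]
      _ ≤ ∑' c : Fin (k + 1) → α, chainWeight a K c * (r * f (c (Fin.last k))) := by
          gcongr with c; exact hK _
      _ = r * ∑' c : Fin (k + 1) → α, chainWeight a K c * f (c (Fin.last k)) := by
          rw [← ENNReal.tsum_mul_left]; exact tsum_congr fun c => by ring
      _ ≤ r ^ (k + 1) * ∑' p, a p * f p := by
          rw [pow_succ', mul_assoc]; gcongr

end ChainWeight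

lemma measure_one_le_le_of_poisson {Ω : Type*} [MeasurableSpace Ω] (P : Measure Ω)
    [IsProbabilityMeasure P] {X : Ω → ℕ} (hX : Measurable X) {t : ℝ}
    (h0 : P {ω | X ω = 0} = poissonProb t 0) : P {ω | 1 ≤ X ω} ≤ ENNReal.ofReal t := by
  have hcompl : {ω | 1 ≤ X ω} = {ω | X ω = 0}ᶜ := by ext; simp [Nat.one_le_iff_ne_zero]
  have hmeas : MeasurableSet {ω | X ω = 0} := hX (measurableSet_singleton 0)
  rw [hcompl, prob_compl_eq_one_sub hmeas, h0, tsub_le_iff_right]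
  calc (1 : ℝ≥0∞) = ENNReal.ofReal 1 := ENNReal.ofReal_one.symm
    _ ≤ ENNReal.ofReal (t + Real.exp (-t)) :=
      ENNReal.ofReal_le_ofReal (by linarith [Real.add_one_le_exp (-t)])
    _ ≤ ENNReal.ofReal t + poissonProb t 0 := by simpa [poissonProb] using ENNReal.ofReal_add_le

namespace PoissonZoo

variable {d : ℕ}

def Link (p q : Zd d × Animal d) : Prop :=
  ∃ w, w - p.1 ∈ closF p.2.1 ∧ w - q.1 ∈ q.2.1

def IsChainFrom (y : Zd d) {k : ℕ} (c : Fin (k + 1) → Zd d × Animal d) : Prop :=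
  y - (c 0).1 ∈ (c 0).2.1 ∧ ∀ i : Fin k, Link (c i.castSucc) (c i.succ)

lemma link_of_isNbr {p q : Zd d × Animal d} {a b : Zd d} (ha : a - p.1 ∈ p.2.1)
    (hb : b - q.1 ∈ q.2.1) (h : IsNbr a b) : Link p q :=
  ⟨b, mem_closF_of_isNbr ha (isNbr_sub_right.2 h), hb⟩

/-- Links are required in both directions to make adjacency symmetric; nothing is lost, since
animals covering two neighbouring sites are linked both ways. -/
def linkGraph (A : Set (Zd d × Animal d)) : SimpleGraph (Zd d × Animal d) where
  Adj p q := p ≠ q ∧ p ∈ A ∧ q ∈ A ∧ Link p q ∧ Link q p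
  symm := ⟨fun _ _ ⟨hne, hp, hq, hpq, hqp⟩ => ⟨hne.symm, hq, hp, hqp, hpq⟩⟩
  loopless := ⟨fun _ h => h.1 rfl⟩

lemma linkGraph_adj {A : Set (Zd d × Animal d)} {p q : Zd d × Animal d} :
    (linkGraph A).Adj p q ↔ p ≠ q ∧ p ∈ A ∧ q ∈ A ∧ Link p q ∧ Link q p :=
  Iff.rfl

section Cluster

variable {Ω : Type*} (N : Zd d × Animal d → Ω → ℕ) (ω : Ω)

lemma exists_reachable_of_mem_cluster {y z : Zd d} (hz : z ∈ cluster (zooTrace N ω) y) :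
    ∃ p q, 1 ≤ N p ω ∧ y - p.1 ∈ p.2.1 ∧ 1 ≤ N q ω ∧ z - q.1 ∈ q.2.1 ∧
      (linkGraph {p | 1 ≤ N p ω}).Reachable p q := by
  obtain ⟨⟨p, hp, hyp⟩, n, γ, rfl, rfl, hstep, hmem⟩ := hz
  suffices ∀ t ≤ n, ∃ q, 1 ≤ N q ω ∧ γ t - q.1 ∈ q.2.1 ∧
      (linkGraph {p | 1 ≤ N p ω}).Reachable p q by
    obtain ⟨q, hq, hzq, hpq⟩ := this n le_rfl
    exact ⟨p, q, hp, hyp, hq, hzq, hpq⟩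
  intro t ht
  induction t with
  | zero => exact ⟨p, hp, hyp, .refl p⟩
  | succ t ih =>
    obtain ⟨q, hq, hγq, hpq⟩ := ih (by omega)
    obtain ⟨q', hq', hγq'⟩ := hmem (t + 1) ht
    refine ⟨q', hq', hγq', ?_⟩
    by_cases hqq' : q = q'
    · exact hqq' ▸ hpq
    · have hnbr := hstep t ht
      exact hpq.trans (SimpleGraph.Adj.reachable <| linkGraph_adj.2 ⟨hqq', hq, hq',
        link_of_isNbr hγq hγq' hnbr, link_of_isNbr hγq' hγq hnbr.symm⟩)

lemma exists_chain_of_mem_cluster {y z : Zd d} (hz : z ∈ cluster (zooTrace N ω) y) :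
    ∃ (k : ℕ) (c : Fin (k + 1) → Zd d × Animal d), IsChainFrom y c ∧ Function.Injective c ∧
      (∀ i, 1 ≤ N (c i) ω) ∧ z - (c (Fin.last k)).1 ∈ (c (Fin.last k)).2.1 := by
  obtain ⟨p, q, hp, hyp, hq, hzq, hpq⟩ := exists_reachable_of_mem_cluster N ω hz
  obtain ⟨P, hP, -⟩ := hpq.exists_path_of_dist
  have hadj (i : ℕ) (hi : i < P.length) :=
    linkGraph_adj.1 (P.adj_getVert_succ hi)
  refine ⟨P.length, fun i => P.getVert i, ⟨by simpa using hyp, fun i => ?_⟩, fun i j hij => ?_,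
    fun i => ?_, by simpa using hzq⟩
  · simpa using (hadj i (by simp)).2.2.2.1
  · exact Fin.ext (hP.getVert_injOn (by simp [Fin.is_le]) (by simp [Fin.is_le]) hij)
  · rcases (Nat.lt_succ_iff.1 i.2).lt_or_eq with hi | hi
    · exact (hadj i hi).2.1
    · simpa [hi] using hq

end Cluster

def secondMoment (ν : Animal d → ℝ≥0∞) : ℝ≥0∞ :=
  ∑' H : Animal d, (H.1.card : ℝ≥0∞) ^ 2 * ν H

lemma encard_sub_mem (y : Zd d) (H : Finset (Zd d)) : {x | y - x ∈ H}.encard = H.card := by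
  rw [← Set.encard_coe_eq_coe_finsetCard]
  exact Set.encard_preimage_of_bijective (Equiv.subLeft y).bijective _

lemma encard_sub_right_mem (x : Zd d) (H : Finset (Zd d)) : {z | z - x ∈ H}.encard = H.card := by
  rw [← Set.encard_coe_eq_coe_finsetCard]
  exact Set.encard_preimage_of_bijective (Equiv.subRight x).bijective _

lemma encard_link_le (p : Zd d × Animal d) (H : Animal d) :
    {x | Link p (x, H)}.encard ≤ (2 * d + 1) * p.2.1.card * H.1.card := by
  classical
  have hsub : {x | Link p (x, H)} ⊆ ↑(Finset.image₂ (fun a h => p.1 + a - h) (closF p.2.1) H.1) :=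
    fun x ⟨w, hwp, hwx⟩ => Finset.mem_image₂.2 ⟨w - p.1, hwp, w - x, hwx, by abel⟩
  refine (Set.encard_le_encard hsub).trans ?_
  rw [Set.encard_coe_eq_coe_finsetCard]
  exact_mod_cast (Finset.card_image₂_le _ _ _).trans (Nat.mul_le_mul_right _ (card_closF_le _))

section Weights

variable (ν : Animal d → ℝ≥0∞) (u : ℝ≥0∞)

def startWeight (y : Zd d) (q : Zd d × Animal d) : ℝ≥0∞ :=
  if y - q.1 ∈ q.2.1 then u * ν q.2 else 0

open scoped Classical in
def linkWeight (p q : Zd d × Animal d) : ℝ≥0∞ :=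
  if Link p q then u * ν q.2 else 0

lemma tsum_startWeight_mul_le (y : Zd d) :
    ∑' q, startWeight ν u y q * q.2.1.card ≤ u * secondMoment ν := by
  simp only [startWeight, ite_mul, zero_mul]
  refine (ENNReal.tsum_prod_ite_le_of_encard_le (fun q => y - q.1 ∈ q.2.1) (fun H => H.1.card)
    (fun H => u * ν H * H.1.card) fun H => (encard_sub_mem y H.1).le).trans_eq ?_
  rw [secondMoment, ← ENNReal.tsum_mul_left]
  exact tsum_congr fun H => by ring

lemma tsum_linkWeight_mul_le (p : Zd d × Animal d) :
    ∑' q, linkWeight ν u p q * q.2.1.card ≤ (2 * d + 1 : ℕ) * secondMoment ν * u * p.2.1.card := by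
  classical
  simp only [linkWeight, ite_mul, zero_mul]
  refine (ENNReal.tsum_prod_ite_le_of_encard_le (Link p)
    (fun H => (2 * d + 1) * p.2.1.card * H.1.card) (fun H => u * ν H * H.1.card)
    fun H => encard_link_le p H).trans_eq ?_
  calc _ = ∑' H : Animal d, ((2 * d + 1 : ℕ) * u * p.2.1.card) * ((H.1.card : ℝ≥0∞) ^ 2 * ν H) :=
        tsum_congr fun H => by push_cast; ring
    _ = _ := by rw [ENNReal.tsum_mul_left, secondMoment]; ring

lemma chainWeight_eq_prod {y : Zd d} {k : ℕ} {c : Fin (k + 1) → Zd d × Animal d}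
    (hc : IsChainFrom y c) :
    chainWeight (startWeight ν u y) (linkWeight ν u) c = ∏ i, u * ν (c i).2 := by
  classical
  rw [chainWeight, Fin.prod_univ_succ, startWeight, if_pos hc.1]
  exact congrArg _ (Finset.prod_congr rfl fun i _ => if_pos (hc.2 i))

end Weights

variable {Ω : Type*}

def chainEvent (N : Zd d × Animal d → Ω → ℕ) (y : Zd d) {k : ℕ}
    (c : Fin (k + 1) → Zd d × Animal d) : Set Ω :=
  {ω | IsChainFrom y c ∧ Function.Injective c ∧ ∀ i, 1 ≤ N (c i) ω}

def clusterMajorant (N : Zd d × Animal d → Ω → ℕ) (y : Zd d) (ω : Ω) : ℝ≥0∞ :=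
  ∑' σ : Σ k : ℕ, Fin (k + 1) → Zd d × Animal d,
    (chainEvent N y σ.2).indicator (fun _ => ((σ.2 (Fin.last σ.1)).2.1.card : ℝ≥0∞)) ω

lemma encard_cluster_le_clusterMajorant (N : Zd d × Animal d → Ω → ℕ) (y : Zd d) (ω : Ω) :
    ((cluster (zooTrace N ω) y).encard : ℝ≥0∞) ≤ clusterMajorant N y ω := by
  refine (Set.encard_le_tsum_encard_of_subset_iUnion (t := fun σ => {z | ω ∈ chainEvent N y σ.2 ∧
    z - (σ.2 (Fin.last σ.1)).1 ∈ (σ.2 (Fin.last σ.1)).2.1}) fun z hz => ?_).trans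
    (ENNReal.tsum_le_tsum fun σ => ?_)
  · obtain ⟨k, c, hchain, hinj, hpres, hzc⟩ := exists_chain_of_mem_cluster N ω hz
    exact Set.mem_iUnion.2 ⟨⟨k, c⟩, ⟨hchain, hinj, hpres⟩, hzc⟩
  · by_cases hω : ω ∈ chainEvent N y σ.2
    · simp [hω, encard_sub_right_mem]
    · simp [hω]

lemma not_percSet_of_forall_finite_cluster {S : Set (Zd d)} (h : ∀ x, (cluster S x).Finite) :
    ¬ PercSet S := by
  rintro ⟨x, hx, hinf⟩
  exact hinf (by simpa [cluster, hx] using h x)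

variable [MeasurableSpace Ω] {P : Measure Ω} [IsProbabilityMeasure P]
  {ν : Animal d → ℝ≥0∞} {N : Zd d × Animal d → Ω → ℕ} {v : ℝ}

lemma measurableSet_chainEvent (hNmeas : ∀ p, Measurable (N p)) (y : Zd d) {k : ℕ}
    (c : Fin (k + 1) → Zd d × Animal d) : MeasurableSet (chainEvent N y c) :=
  measurableSet_setOfPred.2 <| measurable_const.and <| measurable_const.and <|
    Measurable.forall fun _ => measurableSet_setOfPred.1 (hNmeas _ measurableSet_Ici)

lemma measurable_clusterMajorant (hNmeas : ∀ p, Measurable (N p)) (y : Zd d) :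
    Measurable (clusterMajorant N y) :=
  Measurable.tsum fun σ => measurable_const.indicator (measurableSet_chainEvent hNmeas y σ.2)

lemma measure_forall_present_le (hNmeas : ∀ p, Measurable (N p))
    (hindep : ProbabilityTheory.iIndepFun N P)
    (hpois : ∀ p k, P {ω | N p ω = k} = poissonProb (v * (ν p.2).toReal) k)
    {ι : Type*} [Fintype ι] {c : ι → Zd d × Animal d} (hc : Function.Injective c) :
    P {ω | ∀ i, 1 ≤ N (c i) ω} ≤ ∏ i, ENNReal.ofReal v * ν (c i).2 := by
  have hset : {ω | ∀ i, 1 ≤ N (c i) ω} = ⋂ i ∈ Finset.univ, N (c i) ⁻¹' Set.Ici 1 := by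
    ext; simp
  rw [hset, (hindep.precomp hc).measure_inter_preimage_eq_mul Finset.univ
    (sets := fun _ => Set.Ici 1) fun _ _ => measurableSet_Ici]
  refine Finset.prod_le_prod' fun i _ =>
    (measure_one_le_le_of_poisson P (hNmeas _) (hpois _ 0)).trans ?_
  rw [ENNReal.ofReal_mul' ENNReal.toReal_nonneg]
  gcongr
  exact ENNReal.ofReal_toReal_le

lemma measure_chainEvent_le (hNmeas : ∀ p, Measurable (N p))
    (hindep : ProbabilityTheory.iIndepFun N P)
    (hpois : ∀ p k, P {ω | N p ω = k} = poissonProb (v * (ν p.2).toReal) k)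
    (y : Zd d) {k : ℕ} (c : Fin (k + 1) → Zd d × Animal d) :
    P (chainEvent N y c) ≤
      chainWeight (startWeight ν (.ofReal v) y) (linkWeight ν (.ofReal v)) c := by
  by_cases hc : IsChainFrom y c ∧ Function.Injective c
  · rw [chainWeight_eq_prod ν _ hc.1]
    simpa [chainEvent, hc] using measure_forall_present_le hNmeas hindep hpois hc.2
  · rw [Set.eq_empty_of_forall_notMem (s := chainEvent N y c) fun ω hω => hc ⟨hω.1, hω.2.1⟩,
      measure_empty]
    exact zero_le

lemma lintegral_clusterMajorant_le (hNmeas : ∀ p, Measurable (N p))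
    (hindep : ProbabilityTheory.iIndepFun N P)
    (hpois : ∀ p k, P {ω | N p ω = k} = poissonProb (v * (ν p.2).toReal) k) (y : Zd d) :
    ∫⁻ ω, clusterMajorant N y ω ∂P ≤ ∑' k : ℕ,
      ((2 * d + 1 : ℕ) * secondMoment ν * .ofReal v) ^ k * (.ofReal v * secondMoment ν) := by
  set u := ENNReal.ofReal v
  calc ∫⁻ ω, clusterMajorant N y ω ∂P
      = ∑' σ : Σ k : ℕ, Fin (k + 1) → Zd d × Animal d,
          (σ.2 (Fin.last σ.1)).2.1.card * P (chainEvent N y σ.2) := by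
        have hmeas : ∀ σ : Σ k : ℕ, Fin (k + 1) → Zd d × Animal d, AEMeasurable
            ((chainEvent N y σ.2).indicator fun _ => ((σ.2 (Fin.last σ.1)).2.1.card : ℝ≥0∞)) P :=
          fun σ => (measurable_const.indicator (measurableSet_chainEvent hNmeas y σ.2)).aemeasurable
        exact (lintegral_tsum hmeas).trans
          (tsum_congr fun σ => lintegral_indicator_const (measurableSet_chainEvent hNmeas y _) _)
    _ ≤ ∑' σ : Σ k : ℕ, Fin (k + 1) → Zd d × Animal d,
          chainWeight (startWeight ν u y) (linkWeight ν u) σ.2 * (σ.2 (Fin.last σ.1)).2.1.card :=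
        ENNReal.tsum_le_tsum fun σ => by
          rw [mul_comm]; gcongr; exact measure_chainEvent_le hNmeas hindep hpois y σ.2
    _ = ∑' (k : ℕ) (c : Fin (k + 1) → Zd d × Animal d),
          chainWeight (startWeight ν u y) (linkWeight ν u) c * (c (Fin.last k)).2.1.card :=
        ENNReal.tsum_sigma' _
    _ ≤ ∑' k : ℕ, ((2 * d + 1 : ℕ) * secondMoment ν * u) ^ k * (u * secondMoment ν) :=
        ENNReal.tsum_le_tsum fun k =>
          (tsum_chainWeight_mul_le _ _ _ _ (tsum_linkWeight_mul_le ν u) k).trans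
            (by gcongr; exact tsum_startWeight_mul_le ν u y)

lemma lintegral_clusterMajorant_ne_top (hNmeas : ∀ p, Measurable (N p))
    (hindep : ProbabilityTheory.iIndepFun N P)
    (hpois : ∀ p k, P {ω | N p ω = k} = poissonProb (v * (ν p.2).toReal) k)
    (hr : (2 * d + 1 : ℕ) * secondMoment ν * .ofReal v < 1) (y : Zd d) :
    ∫⁻ ω, clusterMajorant N y ω ∂P ≠ ⊤ := by
  have hstart : .ofReal v * secondMoment ν ≤ (2 * d + 1 : ℕ) * secondMoment ν * .ofReal v :=
    calc .ofReal v * secondMoment ν = 1 * secondMoment ν * .ofReal v := by ring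
      _ ≤ _ := by gcongr; exact_mod_cast Nat.le_add_left 1 (2 * d)
  refine ne_top_of_le_ne_top ?_ (lintegral_clusterMajorant_le hNmeas hindep hpois y)
  rw [ENNReal.tsum_mul_right, ENNReal.tsum_geometric]
  exact ENNReal.mul_ne_top (ENNReal.inv_ne_top.2 (tsub_pos_of_lt hr).ne')
    (hstart.trans_lt (hr.trans ENNReal.one_lt_top)).ne

end PoissonZoo

open PoissonZoo

theorem poisson_zoo_finite_second_moment_subcritical_general {d : ℕ}
    {Ω : Type*} [MeasurableSpace Ω] (P : Measure Ω) [IsProbabilityMeasure P]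
    (ν : Animal d → ℝ≥0∞)
    (N : Zd d × Animal d → Ω → ℕ) (hNmeas : ∀ p, Measurable (N p))
    (hindep : ProbabilityTheory.iIndepFun N P)
    (v : ℝ)
    (hpois : ∀ p k, P {ω | N p ω = k} = poissonProb (v * (ν p.2).toReal) k)
    (m2 : ℝ≥0∞) (hm2 : m2 = ∑' H : Animal d, (H.1.card : ℝ≥0∞) ^ 2 * ν H)
    (hvsmall : ENNReal.ofReal v < (((2 * d + 1 : ℕ) : ℝ≥0∞) * m2)⁻¹) :
    (∫⁻ ω, ((cluster (zooTrace N ω) 0).encard).toENNReal ∂P) ≠ ⊤ ∧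
    ∀ᵐ ω ∂P, ¬ PercSet (zooTrace N ω) := by
  subst hm2
  have hr : (2 * d + 1 : ℕ) * secondMoment ν * .ofReal v < 1 := by
    rw [mul_comm]
    exact ENNReal.mul_lt_of_lt_div (by rwa [one_div])
  have hfin (y : Zd d) : ∫⁻ ω, clusterMajorant N y ω ∂P ≠ ⊤ :=
    lintegral_clusterMajorant_ne_top hNmeas hindep hpois hr y
  refine ⟨ne_top_of_le_ne_top (hfin 0)
    (lintegral_mono fun ω => encard_cluster_le_clusterMajorant N 0 ω), ?_⟩
  have hfinite : ∀ᵐ ω ∂P, ∀ y, (cluster (zooTrace N ω) y).Finite :=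
    ae_all_iff.2 fun y => (ae_lt_top (measurable_clusterMajorant hNmeas y) (hfin y)).mono
      fun ω hω => Set.encard_lt_top_iff.1 <| ENat.toENNReal_lt_top.1 <|
        (encard_cluster_le_clusterMajorant N y ω).trans_lt hω
  filter_upwards [hfinite] with ω hω using not_percSet_of_forall_finite_cluster hω

theorem poisson_zoo_finite_second_moment_subcritical {d : ℕ}
    {Ω : Type*} [MeasurableSpace Ω] (P : Measure Ω) [IsProbabilityMeasure P]
    (ν : Animal d → ℝ≥0∞) (hν : ∑' H : Animal d, ν H = 1)
    (N : Zd d × Animal d → Ω → ℕ) (hNmeas : ∀ p, Measurable (N p))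
    (hindep : ProbabilityTheory.iIndepFun N P)
    (v : ℝ) (hv : 0 < v)
    (hpois : ∀ p k, P {ω | N p ω = k} = poissonProb (v * (ν p.2).toReal) k)
    (m2 : ℝ≥0∞) (hm2 : m2 = ∑' H : Animal d, (H.1.card : ℝ≥0∞) ^ 2 * ν H) (hm2fin : m2 ≠ ⊤)
    (hvsmall : ENNReal.ofReal v < (((2 * d + 1 : ℕ) : ℝ≥0∞) * m2)⁻¹) :
    (∫⁻ ω, ((cluster (zooTrace N ω) 0).encard).toENNReal ∂P) ≠ ⊤ ∧
    ∀ᵐ ω ∂P, ¬ PercSet (zooTrace N ω) :=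
  poisson_zoo_finite_second_moment_subcritical_general P ν N hNmeas hindep v hpois m2 hm2 hvsmall

end
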